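/- arXiv:2511.07907 — 3 statements merged into one kernel-verified Lean document; each statement's English description precedes it below -/
import Mathlib

section
/- Let G be the discrete-time LTI system x(k+1) = A x(k) + B̄ ū(k), y(k) = C x(k) + D̄ ū(k), with state dimension n_x, input dimension m and output dimension p, and let {(ū^d(k), y^d(k))}_{k=1}^{K} be a length-K input–output trajectory of G. Fix T with T ≤ K. If the pair (A, B̄) is controllable and the input ū^d is persistently exciting of order T + n_x (i.e., the Hankel matrix H_{T+n_x}(ū^d_{1:K}) has full row rank m(T+n_x)), then a pair of finite sequences {(ū(k), y(k))}_{k=1}^{T} is a length-T input–output trajectory of G if and only if there exists a vector g ∈ ℝ^{M}, with M = K − T + 1, such that col(ū(1),…,ū(T)) = H_T(ū^d_{1:K}) g and col(y(1),…,y(T)) = H_T(y^d_{1:K}) g. -/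
open Matrix

/-- `(u, y)` restricted to the (0-based) indices `0, …, T-1` is a length-`T`
input–output trajectory of the LTI system `(A, B, C, D)`. -/
def IsTraj {nx : ℕ} {ι κ : Type*} [Fintype ι]
    (A : Matrix (Fin nx) (Fin nx) ℝ) (B : Matrix (Fin nx) ι ℝ)
    (C : Matrix κ (Fin nx) ℝ) (D : Matrix κ ι ℝ)
    (T : ℕ) (u : ℕ → ι → ℝ) (y : ℕ → κ → ℝ) : Prop :=
  ∃ x : ℕ → Fin nx → ℝ, ∀ k < T,
    x (k + 1) = A.mulVec (x k) + B.mulVec (u k) ∧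
    y k = C.mulVec (x k) + D.mulVec (u k)

/-- Hankel matrix of depth `T` built from the first `K` samples (0-based indices
`0, …, K-1`) of the vector-valued sequence `ζ`; it has `T` block rows and
`M = K - T + 1` columns. -/
def Hankel {ι : Type*} (T K : ℕ) (ζ : ℕ → ι → ℝ) :
    Matrix (Fin T × ι) (Fin (K - T + 1)) ℝ :=
  fun p j => ζ ((p.1 : ℕ) + (j : ℕ)) p.2

/-- Stacked (column) vector `col(z(0), …, z(T-1))`. -/
def stack {ι : Type*} (T : ℕ) (z : ℕ → ι → ℝ) : Fin T × ι → ℝ :=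
  fun p => z (p.1 : ℕ) p.2

/-- Controllability matrix `[B, AB, …, A^{nx-1}B]`. -/
def ctrbMat {nx : ℕ} {ι : Type*} [Fintype ι]
    (A : Matrix (Fin nx) (Fin nx) ℝ) (B : Matrix (Fin nx) ι ℝ) :
    Matrix (Fin nx) (Fin nx × ι) ℝ :=
  fun i p => (A ^ (p.1 : ℕ) * B) i p.2

open Matrix Finset

lemma dp_vecMul' {ι κ : Type*} [Fintype ι] [Fintype κ]
    (ζ : ι → ℝ) (M : Matrix ι κ ℝ) (w : κ → ℝ) :
    ∑ e, (ζ ᵥ* M) e * w e = ∑ i, ζ i * (M *ᵥ w) i := by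
  simp only [Matrix.vecMul, Matrix.mulVec, dotProduct, Finset.sum_mul, Finset.mul_sum]
  rw [Finset.sum_comm]
  exact Finset.sum_congr rfl fun i _ => Finset.sum_congr rfl fun e _ => by ring

lemma mulVec_sum' {ι κ γ : Type*} [Fintype κ] (M : Matrix ι κ ℝ) (s : Finset γ)
    (w : γ → κ → ℝ) : M *ᵥ (∑ j ∈ s, w j) = ∑ j ∈ s, M *ᵥ (w j) := by
  funext i
  simp only [Matrix.mulVec, dotProduct, Finset.sum_apply, Finset.mul_sum]
  rw [Finset.sum_comm]

lemma sum_smul_mulVec' {ι κ γ : Type*} [Fintype κ] (M : Matrix ι κ ℝ) (s : Finset γ)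
    (c : γ → ℝ) (w : γ → κ → ℝ) :
    ∑ j ∈ s, c j • (M *ᵥ w j) = M *ᵥ (∑ j ∈ s, c j • w j) := by
  rw [mulVec_sum']
  exact Finset.sum_congr rfl fun j _ => by
    funext i
    simp only [Pi.smul_apply, smul_eq_mul, Matrix.mulVec, dotProduct, Finset.mul_sum]
    exact Finset.sum_congr rfl fun e _ => by ring

lemma vecMul_sumMat' {ι κ γ : Type*} [Fintype ι] (v : ι → ℝ) (s : Finset γ)
    (M : γ → Matrix ι κ ℝ) : v ᵥ* (∑ j ∈ s, M j) = ∑ j ∈ s, v ᵥ* (M j) := by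
  funext j
  simp only [Matrix.vecMul, dotProduct, Finset.sum_apply, Matrix.sum_apply, Finset.mul_sum]
  rw [Finset.sum_comm]

lemma vecMul_smulMat' {ι κ : Type*} [Fintype ι] (v : ι → ℝ) (c : ℝ) (M : Matrix ι κ ℝ) :
    v ᵥ* (c • M) = c • (v ᵥ* M) := by
  funext j
  simp only [Matrix.vecMul, dotProduct, Matrix.smul_apply, smul_eq_mul, Pi.smul_apply,
    Finset.mul_sum]
  exact Finset.sum_congr rfl fun i _ => by ring

lemma fullRowRank_vecMul_inj' {ι κ : Type*} [Fintype ι] [Fintype κ]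
    (M : Matrix ι κ ℝ) (h : M.rank = Fintype.card ι) : Function.Injective M.vecMul := by
  rw [Matrix.vecMul_injective_iff, linearIndependent_iff_card_eq_finrank_span, Set.finrank,
    ← Matrix.rank_eq_finrank_span_row]
  exact h.symm

lemma fullRowRank_mulVec_surj' {ι κ : Type*} [Fintype ι] [Fintype κ]
    (M : Matrix ι κ ℝ) (h : M.rank = Fintype.card ι) : Function.Surjective M.mulVec := by
  unfold Matrix.rank at h
  have h2 : LinearMap.range M.mulVecLin = ⊤ :=
    Submodule.eq_top_of_finrank_eq (by rw [Module.finrank_pi]; exact h)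
  intro b
  obtain ⟨a, ha⟩ := LinearMap.range_eq_top.mp h2 b
  exact ⟨a, by simpa using ha⟩

lemma cayley' {nx : ℕ} (A : Matrix (Fin nx) (Fin nx) ℝ) :
    A ^ nx = ∑ s ∈ Finset.range nx, (-(A.charpoly.coeff s)) • A ^ s := by
  have h0 := Matrix.aeval_self_charpoly A
  rw [Polynomial.aeval_eq_sum_range, Matrix.charpoly_natDegree_eq_dim, Fintype.card_fin,
    Finset.sum_range_succ] at h0
  have hm : A.charpoly.coeff nx = 1 := by
    have := (Matrix.charpoly_monic A).coeff_natDegree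
    rwa [Matrix.charpoly_natDegree_eq_dim, Fintype.card_fin] at this
  rw [hm, one_smul] at h0
  have := eq_neg_of_add_eq_zero_right h0
  rw [this, ← Finset.sum_neg_distrib]
  exact Finset.sum_congr rfl fun s _ => (neg_smul _ _).symm

lemma state_formula' {nx m K : ℕ} (A : Matrix (Fin nx) (Fin nx) ℝ)
    (B : Matrix (Fin nx) (Fin m) ℝ) (u : ℕ → Fin m → ℝ) (x : ℕ → Fin nx → ℝ)
    (hx : ∀ k < K, x (k + 1) = A *ᵥ (x k) + B *ᵥ (u k)) :
    ∀ j s : ℕ, j + s ≤ K →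
      x (j + s) = (A ^ s) *ᵥ (x j) +
        ∑ i ∈ Finset.range s, ((A ^ (s - 1 - i)) * B) *ᵥ (u (j + i)) := by
  intro j s
  induction s with
  | zero => intro _; simp
  | succ s ih =>
    intro hjs
    have h1 : x (j + (s + 1)) = A *ᵥ (x (j + s)) + B *ᵥ (u (j + s)) := by
      have := hx (j + s) (by omega)
      rw [← this]
      ring_nf
    rw [h1, ih (by omega), Matrix.mulVec_add, mulVec_sum']
    rw [Finset.sum_range_succ]
    have e1 : A *ᵥ ((A ^ s) *ᵥ x j) = (A ^ (s + 1)) *ᵥ x j := by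
      rw [Matrix.mulVec_mulVec, ← pow_succ']
    have e2 : ∀ i ∈ Finset.range s,
        A *ᵥ (((A ^ (s - 1 - i)) * B) *ᵥ u (j + i)) = ((A ^ (s + 1 - 1 - i)) * B) *ᵥ u (j + i) := by
      intro i hi
      have hi' := Finset.mem_range.mp hi
      rw [Matrix.mulVec_mulVec, ← Matrix.mul_assoc, ← pow_succ']
      have he : s + 1 - 1 - i = s - 1 - i + 1 := by omega
      rw [he]
    rw [Finset.sum_congr rfl e2, e1]
    have e3 : ((A ^ (s + 1 - 1 - s)) * B) *ᵥ u (j + s) = B *ᵥ u (j + s) := by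
      simp
    rw [e3]
    abel

lemma sum_mulVec' {ι κ γ : Type*} [Fintype κ] (s : Finset γ) (M : γ → Matrix ι κ ℝ)
    (w : κ → ℝ) : (∑ j ∈ s, M j) *ᵥ w = ∑ j ∈ s, (M j) *ᵥ w := by
  funext i
  simp only [Matrix.mulVec, dotProduct, Matrix.sum_apply, Finset.sum_apply, Finset.sum_mul]
  rw [Finset.sum_comm]
/-- **Willems' fundamental lemma** (data-driven simulation form).
If `(ū^d, y^d)` is a length-`K` trajectory of the LTI system `(A, B̄, C, D̄)`,
the pair `(A, B̄)` is controllable, and the input data `ū^d` is persistently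
exciting of order `T + n_x` (its depth-`(T+n_x)` Hankel matrix has full row
rank `m(T+n_x)`), then `(ū, y)` is a length-`T` trajectory of the system if and
only if the stacked vectors `col(ū(1),…,ū(T))` and `col(y(1),…,y(T))` are
obtained from the depth-`T` Hankel matrices of the data by a common vector
`g ∈ ℝ^M`, `M = K - T + 1`. -/
theorem statement0
    {nx m p K T : ℕ}
    (A : Matrix (Fin nx) (Fin nx) ℝ) (B : Matrix (Fin nx) (Fin m) ℝ)
    (C : Matrix (Fin p) (Fin nx) ℝ) (D : Matrix (Fin p) (Fin m) ℝ)
    (ud : ℕ → Fin m → ℝ) (yd : ℕ → Fin p → ℝ)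
    (hTK : T ≤ K)
    (hdata : IsTraj A B C D K ud yd)
    (hctrb : (ctrbMat A B).rank = nx)
    (hPE : (Hankel (T + nx) K ud).rank = m * (T + nx))
    (u : ℕ → Fin m → ℝ) (y : ℕ → Fin p → ℝ) :
    IsTraj A B C D T u y ↔
      ∃ g : Fin (K - T + 1) → ℝ,
        stack T u = (Hankel T K ud).mulVec g ∧
        stack T y = (Hankel T K yd).mulVec g := by
  classical
  obtain ⟨xd, hxd⟩ := hdata
  -- combination lemma
  have comb : ∀ (g : Fin (K - T + 1) → ℝ) (k : ℕ), k < T →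
      ((∑ j : Fin (K - T + 1), g j • xd (k + 1 + (j : ℕ))) =
        A *ᵥ (∑ j : Fin (K - T + 1), g j • xd (k + (j : ℕ))) +
        B *ᵥ (∑ j : Fin (K - T + 1), g j • ud (k + (j : ℕ)))) ∧
      ((∑ j : Fin (K - T + 1), g j • yd (k + (j : ℕ))) =
        C *ᵥ (∑ j : Fin (K - T + 1), g j • xd (k + (j : ℕ))) +
        D *ᵥ (∑ j : Fin (K - T + 1), g j • ud (k + (j : ℕ)))) := by
    intro g k hk
    have hkj : ∀ j : Fin (K - T + 1), k + (j : ℕ) < K := by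
      intro j
      have := Nat.lt_succ_iff.mp j.isLt
      omega
    have hstep := fun j : Fin (K - T + 1) => hxd (k + (j : ℕ)) (hkj j)
    constructor
    · have h1 : ∀ j : Fin (K - T + 1), g j • xd (k + 1 + (j : ℕ)) =
          g j • (A *ᵥ xd (k + (j : ℕ))) + g j • (B *ᵥ ud (k + (j : ℕ))) := by
        intro j
        have he : k + 1 + (j : ℕ) = k + (j : ℕ) + 1 := by omega
        rw [he, (hstep j).1, smul_add]
      rw [Finset.sum_congr rfl (fun j _ => h1 j), Finset.sum_add_distrib,
        sum_smul_mulVec', sum_smul_mulVec']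
    · have h1 : ∀ j : Fin (K - T + 1), g j • yd (k + (j : ℕ)) =
          g j • (C *ᵥ xd (k + (j : ℕ))) + g j • (D *ᵥ ud (k + (j : ℕ))) := by
        intro j
        rw [(hstep j).2, smul_add]
      rw [Finset.sum_congr rfl (fun j _ => h1 j), Finset.sum_add_distrib,
        sum_smul_mulVec', sum_smul_mulVec']
  constructor
  · -- forward direction
    rintro ⟨x, hx⟩
    by_cases hT0 : T = 0
    · subst hT0
      exact ⟨0, funext fun q => q.1.elim0, funext fun q => q.1.elim0⟩
    have hK : T + nx ≤ K := by
      by_contra hcon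
      push_neg at hcon
      have h1 := Matrix.rank_le_card_width (Hankel (T + nx) K ud)
      rw [hPE] at h1
      simp only [Fintype.card_fin] at h1
      have h2 : K - (T + nx) = 0 := by omega
      rw [h2] at h1
      have h3 := Matrix.rank_le_card_width (ctrbMat A B)
      rw [hctrb] at h3
      simp only [Fintype.card_prod, Fintype.card_fin] at h3
      rcases Nat.eq_zero_or_pos m with hm | hm
      · subst hm
        simp at h3
        omega
      · have h4 : T + nx ≤ m * (T + nx) := Nat.le_mul_of_pos_left _ hm
        omega
    set W : Matrix (Fin nx ⊕ Fin T × Fin m) (Fin (K - T + 1)) ℝ :=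
      Sum.elim (fun i j => xd (j : ℕ) i)
        (fun q j => ud ((q.1 : ℕ) + (j : ℕ)) q.2) with hW
    have hWker : ∀ v : Fin nx ⊕ Fin T × Fin m → ℝ, v ᵥ* W = 0 → v = 0 := by
      intro v hv
      obtain ⟨ζ, η, rfl⟩ : ∃ ζ η, v = Sum.elim ζ η :=
        ⟨fun i => v (Sum.inl i), fun q => v (Sum.inr q), by funext r; cases r <;> rfl⟩
      have hker : ∀ jn : ℕ, jn + T ≤ K →
          (∑ i, ζ i * xd jn i) +
            (∑ q : Fin T × Fin m, η q * ud ((q.1 : ℕ) + jn) q.2) = 0 := by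
        intro jn hjn
        have h1 := congrFun hv ⟨jn, by omega⟩
        simpa [Matrix.vecMul, dotProduct, Fintype.sum_sum_type, hW] using h1
      have hsf := state_formula' A B ud xd (fun k hk => (hxd k hk).1)
      set a : ℕ → ℕ → Fin m → ℝ := fun s t =>
        if t < s then ζ ᵥ* ((A ^ (s - 1 - t)) * B)
        else if ht2 : t - s < T then (fun e => η (⟨t - s, ht2⟩, e)) else 0 with ha
      have hclaim1 : ∀ s, s ≤ nx → ∀ jn : ℕ, jn + (T + nx) ≤ K →
          (∑ t ∈ Finset.range (T + nx), ∑ e, a s t e * ud (t + jn) e)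
            = - ∑ i, ζ i * ((A ^ s) *ᵥ (xd jn)) i := by
        intro s hs jn hjn
        rw [Finset.range_eq_Ico,
          ← Finset.sum_Ico_consecutive _ (Nat.zero_le (s + T)) (by omega : s + T ≤ T + nx)]
        have htail : (∑ t ∈ Finset.Ico (s + T) (T + nx), ∑ e, a s t e * ud (t + jn) e) = 0 := by
          apply Finset.sum_eq_zero
          intro t ht
          apply Finset.sum_eq_zero
          intro e _
          have h1 : ¬ t < s := by have := (Finset.mem_Ico.mp ht).1; omega
          have h2 : ¬ (t - s < T) := by have := (Finset.mem_Ico.mp ht).1; omega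
          simp [ha, ite_apply, dite_apply, h1, h2]
        rw [htail, add_zero,
          ← Finset.sum_Ico_consecutive _ (Nat.zero_le s) (by omega : s ≤ s + T)]
        have hmid : (∑ t ∈ Finset.Ico s (s + T), ∑ e, a s t e * ud (t + jn) e)
            = ∑ q : Fin T × Fin m, η q * ud ((q.1 : ℕ) + (jn + s)) q.2 := by
          rw [Finset.sum_Ico_eq_sum_range]
          simp only [add_tsub_cancel_left]
          rw [Fintype.sum_prod_type,
            ← Fin.sum_univ_eq_sum_range (fun i => ∑ e, a s (s + i) e * ud (s + i + jn) e) T]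
          apply Finset.sum_congr rfl
          intro i _
          apply Finset.sum_congr rfl
          intro e _
          have h1 : ¬ (s + (i : ℕ) < s) := by omega
          have h3 : s + (i : ℕ) + jn = (i : ℕ) + (jn + s) := by omega
          rw [h3]
          congr 1
          simp [ha, ite_apply, dite_apply, h1, add_tsub_cancel_left, Fin.eta]
        have hfront : (∑ t ∈ Finset.Ico 0 s, ∑ e, a s t e * ud (t + jn) e)
            = ∑ i, ζ i *
              ((∑ t ∈ Finset.range s, ((A ^ (s - 1 - t)) * B) *ᵥ (ud (jn + t))) i) := by
          rw [← Finset.range_eq_Ico]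
          have h1 : ∀ t ∈ Finset.range s, (∑ e, a s t e * ud (t + jn) e)
              = ∑ i, ζ i * (((A ^ (s - 1 - t)) * B) *ᵥ (ud (jn + t))) i := by
            intro t ht
            have h2 : t < s := Finset.mem_range.mp ht
            have h4 : (∑ e, a s t e * ud (t + jn) e)
                = ∑ e, (ζ ᵥ* ((A ^ (s - 1 - t)) * B)) e * ud (jn + t) e := by
              apply Finset.sum_congr rfl
              intro e _
              have h3 : t + jn = jn + t := by omega
              rw [h3]
              congr 1
              simp [ha, ite_apply, h2]
            rw [h4]
            exact dp_vecMul' ζ _ _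
          rw [Finset.sum_congr rfl h1, Finset.sum_comm]
          apply Finset.sum_congr rfl
          intro i _
          rw [Finset.sum_apply, Finset.mul_sum]
        rw [hfront, hmid]
        have hker2 := hker (jn + s) (by omega)
        have hmid2 : (∑ q : Fin T × Fin m, η q * ud ((q.1 : ℕ) + (jn + s)) q.2)
            = - ∑ i, ζ i * xd (jn + s) i := by linarith [hker2]
        rw [hmid2, hsf jn s (by omega)]
        simp only [Pi.add_apply, mul_add, Finset.sum_add_distrib]
        ring
      have hCH : A ^ nx = ∑ s ∈ Finset.range nx, (-(A.charpoly.coeff s)) • A ^ s := cayley' A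
      have hPEinj : Function.Injective (Hankel (T + nx) K ud).vecMul := by
        apply fullRowRank_vecMul_inj'
        rw [hPE]
        simp [Fintype.card_prod, mul_comm]
      set c : ℕ → ℝ := fun s => -(A.charpoly.coeff s) with hc
      set β : Fin (T + nx) × Fin m → ℝ :=
        fun q => a nx (q.1 : ℕ) q.2 - ∑ s ∈ Finset.range nx, c s * a s (q.1 : ℕ) q.2 with hβ
      have hβ0 : β = 0 := by
        apply hPEinj
        show β ᵥ* Hankel (T + nx) K ud = 0 ᵥ* Hankel (T + nx) K ud
        rw [Matrix.zero_vecMul]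
        funext j
        have hj : (j : ℕ) + (T + nx) ≤ K := by have := j.isLt; omega
        have hq : ∀ s, (∑ q : Fin (T + nx) × Fin m,
              a s (q.1 : ℕ) q.2 * ud ((q.1 : ℕ) + (j : ℕ)) q.2)
            = ∑ t ∈ Finset.range (T + nx), ∑ e, a s t e * ud (t + (j : ℕ)) e := by
          intro s
          rw [Fintype.sum_prod_type,
            ← Fin.sum_univ_eq_sum_range (fun t => ∑ e, a s t e * ud (t + (j : ℕ)) e) (T + nx)]
        have e1 : (A ^ nx) *ᵥ (xd (j : ℕ)) = ∑ s ∈ Finset.range nx, c s • ((A ^ s) *ᵥ (xd (j : ℕ))) := by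
          rw [hCH, sum_mulVec']
          exact Finset.sum_congr rfl fun s _ => Matrix.smul_mulVec _ _ _
        have hXnx : (∑ i, ζ i * ((A ^ nx) *ᵥ (xd (j : ℕ))) i)
            = ∑ s ∈ Finset.range nx, c s * ∑ i, ζ i * ((A ^ s) *ᵥ (xd (j : ℕ))) i := by
          rw [e1]
          simp only [Finset.sum_apply, Pi.smul_apply, smul_eq_mul, Finset.mul_sum]
          rw [Finset.sum_comm]
          refine Finset.sum_congr rfl fun s _ => Finset.sum_congr rfl fun i _ => by ring
        show (β ᵥ* Hankel (T + nx) K ud) j = 0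
        have hexp : (β ᵥ* Hankel (T + nx) K ud) j
            = (∑ t ∈ Finset.range (T + nx), ∑ e, a nx t e * ud (t + (j : ℕ)) e)
              - ∑ s ∈ Finset.range nx, c s *
                  (∑ t ∈ Finset.range (T + nx), ∑ e, a s t e * ud (t + (j : ℕ)) e) := by
          rw [← hq nx]
          conv_rhs => rw [Finset.sum_congr rfl (fun s (_ : s ∈ Finset.range nx) => by rw [← hq s])]
          simp only [Matrix.vecMul, dotProduct, Hankel, hβ, sub_mul, Finset.sum_sub_distrib,
            Finset.sum_mul]
          congr 1
          rw [Finset.sum_comm]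
          refine Finset.sum_congr rfl fun s _ => ?_
          rw [Finset.mul_sum]
          refine Finset.sum_congr rfl fun q _ => by ring
        rw [hexp, hclaim1 nx le_rfl (j : ℕ) hj]
        have hz2 : ∀ s ∈ Finset.range nx,
            c s * (∑ t ∈ Finset.range (T + nx), ∑ e, a s t e * ud (t + (j : ℕ)) e)
              = c s * (- ∑ i, ζ i * ((A ^ s) *ᵥ (xd (j : ℕ))) i) := by
          intro s hs
          rw [hclaim1 s (le_of_lt (Finset.mem_range.mp hs)) (j : ℕ) hj]
        rw [Finset.sum_congr rfl hz2, hXnx]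
        simp only [mul_neg, Finset.sum_neg_distrib]
        ring
      have hβq : ∀ (t : ℕ) (ht : t < T + nx) (e : Fin m),
          a nx t e = ∑ s ∈ Finset.range nx, c s * a s t e := by
        intro t ht e
        have h1 := congrFun hβ0 (⟨t, ht⟩, e)
        simp only [hβ, Pi.zero_apply] at h1
        exact sub_eq_zero.mp h1
      have hη0 : ∀ r : ℕ, ∀ t' : Fin T, T ≤ (t' : ℕ) + r + 1 → ∀ e, η (t', e) = 0 := by
        intro r
        induction r using Nat.strong_induction_on with
        | _ r ih =>
          intro t' ht' e
          have hb := hβq (nx + (t' : ℕ)) (by have := t'.isLt; omega) e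
          have hz : ∀ s ∈ Finset.range nx, c s * a s (nx + (t' : ℕ)) e = 0 := by
            intro s hs
            have hsn := Finset.mem_range.mp hs
            have h1 : ¬ (nx + (t' : ℕ) < s) := by omega
            by_cases h2 : nx + (t' : ℕ) - s < T
            · have hr : 1 ≤ r := by
                by_contra hr0
                push_neg at hr0
                have := t'.isLt
                omega
              have h3 := ih (r - 1) (by omega) ⟨nx + (t' : ℕ) - s, h2⟩ (by simp; omega) e
              simp [ha, ite_apply, dite_apply, h1, h2, h3]
            · simp [ha, ite_apply, dite_apply, h1, h2]
          rw [Finset.sum_eq_zero hz] at hb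
          have h1 : ¬ (nx + (t' : ℕ) < nx) := by omega
          have h2 : nx + (t' : ℕ) - nx < T := by simpa using t'.isLt
          simp only [ha, ite_apply, dite_apply, if_neg h1, dif_pos h2] at hb
          have h4 : (⟨nx + (t' : ℕ) - nx, h2⟩ : Fin T) = t' := by
            ext
            simp
          rw [← h4]
          exact hb
      have hηall : ∀ q : Fin T × Fin m, η q = 0 := by
        intro q
        obtain ⟨t', e⟩ := q
        exact hη0 T t' (by omega) e
      have hζB : ∀ k, k < nx → ζ ᵥ* ((A ^ k) * B) = 0 := by
        intro k
        induction k using Nat.strong_induction_on with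
        | _ k ih =>
          intro hk
          funext e
          have hb := hβq (nx - 1 - k) (by omega) e
          have hz : ∀ s ∈ Finset.range nx, c s * a s (nx - 1 - k) e = 0 := by
            intro s hs
            have hsn := Finset.mem_range.mp hs
            by_cases h1 : nx - 1 - k < s
            · have h2 : s - 1 - (nx - 1 - k) < k := by omega
              have h3 := congrFun (ih (s - 1 - (nx - 1 - k)) h2 (by omega)) e
              simp only [Pi.zero_apply] at h3
              simp [ha, ite_apply, dite_apply, h1, h3]
            · by_cases h2 : nx - 1 - k - s < T
              · have h3 := hηall (⟨nx - 1 - k - s, h2⟩, e)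
                simp [ha, ite_apply, dite_apply, h1, h2, h3]
              · simp [ha, ite_apply, dite_apply, h1, h2]
          rw [Finset.sum_eq_zero hz] at hb
          have h1 : nx - 1 - k < nx := by omega
          have h2 : nx - 1 - (nx - 1 - k) = k := by omega
          simp only [ha, ite_apply, dite_apply, if_pos h1, h2] at hb
          simpa using hb
      have hζctrb : ζ ᵥ* ctrbMat A B = 0 := by
        funext q
        have h1 := congrFun (hζB (q.1 : ℕ) q.1.isLt) q.2
        simp only [Pi.zero_apply] at h1
        simpa [Matrix.vecMul, dotProduct, ctrbMat] using h1
      have hζ0 : ζ = 0 := by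
        have hinj : Function.Injective (ctrbMat A B).vecMul :=
          fullRowRank_vecMul_inj' _ (by simpa using hctrb)
        apply hinj
        show ζ ᵥ* ctrbMat A B = 0 ᵥ* ctrbMat A B
        rw [Matrix.zero_vecMul, hζctrb]
      funext r
      cases r with
      | inl i => exact congrFun hζ0 i
      | inr q => exact hηall q
    have hWinj : Function.Injective W.vecMul := by
      intro v1 v2 h12
      have h0 := hWker (v1 - v2) (by rw [Matrix.sub_vecMul, show v1 ᵥ* W = v2 ᵥ* W from h12, sub_self])
      exact sub_eq_zero.mp h0
    have hWsurj : Function.Surjective W.mulVec :=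
      fullRowRank_mulVec_surj' W (Matrix.vecMul_injective_iff.mp hWinj).rank_matrix
    obtain ⟨g, hg⟩ := hWsurj (Sum.elim (x 0) (stack T u))
    have huk : ∀ k, k < T → u k = ∑ j : Fin (K - T + 1), g j • ud (k + (j : ℕ)) := by
      intro k hk
      funext e
      have h1 := congrFun hg (Sum.inr (⟨k, hk⟩, e))
      simp only [hW, Matrix.mulVec, dotProduct, Sum.elim_inl, Sum.elim_inr, stack] at h1
      simp only [Finset.sum_apply, Pi.smul_apply, smul_eq_mul]
      rw [← h1]
      exact Finset.sum_congr rfl fun j _ => by ring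
    have hxk : ∀ k, k ≤ T → x k = ∑ j : Fin (K - T + 1), g j • xd (k + (j : ℕ)) := by
      intro k
      induction k with
      | zero =>
        intro _
        funext i
        have h1 := congrFun hg (Sum.inl i)
        simp only [hW, Matrix.mulVec, dotProduct, Sum.elim_inl] at h1
        simp only [Finset.sum_apply, Pi.smul_apply, smul_eq_mul, Nat.zero_add]
        rw [← h1]
        exact Finset.sum_congr rfl fun j _ => by ring
      | succ k ih =>
        intro hk1
        have hk : k < T := by omega
        rw [(hx k hk).1, ih (by omega), huk k hk, (comb g k hk).1]
    refine ⟨g, ?_, ?_⟩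
    · funext q
      obtain ⟨t, e⟩ := q
      have h1 := congrFun (huk (t : ℕ) t.isLt) e
      simp only [Finset.sum_apply, Pi.smul_apply, smul_eq_mul] at h1
      simp only [stack, Hankel, Matrix.mulVec, dotProduct]
      rw [h1]
      exact Finset.sum_congr rfl fun j _ => by ring
    · funext q
      obtain ⟨t, e⟩ := q
      have h1 := (hx (t : ℕ) t.isLt).2
      rw [hxk (t : ℕ) (le_of_lt t.isLt), huk (t : ℕ) t.isLt, ← (comb g (t : ℕ) t.isLt).2] at h1
      have h2 := congrFun h1 e
      simp only [Finset.sum_apply, Pi.smul_apply, smul_eq_mul] at h2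
      simp only [stack, Hankel, Matrix.mulVec, dotProduct]
      rw [h2]
      exact Finset.sum_congr rfl fun j _ => by ring
  · rintro ⟨g, hu, hy⟩
    refine ⟨fun t => ∑ j : Fin (K - T + 1), g j • xd (t + (j : ℕ)), fun k hk => ?_⟩
    have hu' : u k = ∑ j : Fin (K - T + 1), g j • ud (k + (j : ℕ)) := by
      funext e
      have h1 := congrFun hu (⟨k, hk⟩, e)
      simpa [stack, Hankel, Matrix.mulVec, dotProduct, Finset.sum_apply, Pi.smul_apply,
        smul_eq_mul, mul_comm] using h1
    have hy' : y k = ∑ j : Fin (K - T + 1), g j • yd (k + (j : ℕ)) := by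
      funext e
      have h1 := congrFun hy (⟨k, hk⟩, e)
      simpa [stack, Hankel, Matrix.mulVec, dotProduct, Finset.sum_apply, Pi.smul_apply,
        smul_eq_mul, mul_comm] using h1
    obtain ⟨c1, c2⟩ := comb g k hk
    exact ⟨by rw [hu']; exact c1, by rw [hy', hu']; exact c2⟩
end

section
/- Let G be the discrete-time LTI system x(k+1) = A x(k) + B̄ ū(k), y(k) = C x(k) + D̄ ū(k), with state dimension n_x, and let {(ū^d(k), y^d(k))}_{k=1}^{K} be a length-K trajectory of G. Let T = T_p + T_f with T_p ≥ n_x. Assume (A, B̄) is controllable, (A, C) is observable, and ū^d is persistently exciting of order T + n_x. Partition H_T(ū^d_{1:K}) into its first T_p block rows H_ūp and last T_f block rows H_ūf, and similarly H_T(y^d_{1:K}) into H_yp and H_yf. Suppose (ū_p, y_p) is a length-T_p trajectory of G and ū_f ∈ ℝ^{m T_f} is a future input. Then: (a) there exists a unique y_f ∈ ℝ^{p T_f} such that the concatenated pair (col(ū_p, ū_f), col(y_p, y_f)) is a length-T trajectory of G; and (b) a vector y_f equals this unique output continuation if and only if there exists g ∈ ℝ^{M} with ū_p = H_ūp g, ū_f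 = H_ūf g, y_p = H_yp g, and y_f = H_yf g. -/
open Matrix

/-- The first `Tp` block rows of the depth-`(Tp + Tf)` Hankel matrix with `M` columns. -/
def HankelPast {ι : Type*} (Tp M : ℕ) (ζ : ℕ → ι → ℝ) :
    Matrix (Fin Tp × ι) (Fin M) ℝ :=
  fun p j => ζ ((p.1 : ℕ) + (j : ℕ)) p.2

/-- The last `Tf` block rows of the depth-`(Tp + Tf)` Hankel matrix with `M` columns. -/
def HankelFut {ι : Type*} (Tp Tf M : ℕ) (ζ : ℕ → ι → ℝ) :
    Matrix (Fin Tf × ι) (Fin M) ℝ :=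
  fun p j => ζ (Tp + (p.1 : ℕ) + (j : ℕ)) p.2

/-- Concatenation of a past sequence (its first `Tp` samples) with a future
finite sequence of length `Tf`. -/
def glue {ι : Type*} (Tp Tf : ℕ) (past : ℕ → ι → ℝ) (fut : Fin Tf → ι → ℝ) :
    ℕ → ι → ℝ :=
  fun k => if k < Tp then past k else if h : k - Tp < Tf then fut ⟨k - Tp, h⟩ else 0

/-- Observability matrix `col(C, CA, …, CA^{nx-1})`. -/
def obsvMat {nx : ℕ} {κ : Type*}
    (A : Matrix (Fin nx) (Fin nx) ℝ) (C : Matrix κ (Fin nx) ℝ) :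
    Matrix (Fin nx × κ) (Fin nx) ℝ :=
  fun p j => (C * A ^ (p.1 : ℕ)) p.2 j


open Function Finset

lemma aux_vecMul_inj {ι κ : Type*} [Fintype ι] [Fintype κ]
    (A : Matrix ι κ ℝ) (h : A.rank = Fintype.card ι) {v : ι → ℝ}
    (hv : v ᵥ* A = 0) : v = 0 := by
  have ht : (Aᵀ).rank = Fintype.card ι := by rw [Matrix.rank_transpose]; exact h
  have hker : LinearMap.ker (Aᵀ).mulVecLin = ⊥ := by
    have h1 := LinearMap.finrank_range_add_finrank_ker (Aᵀ).mulVecLin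
    rw [show Module.finrank ℝ (LinearMap.range (Aᵀ).mulVecLin) = (Aᵀ).rank from rfl, ht,
      Module.finrank_pi] at h1
    have : Module.finrank ℝ (LinearMap.ker (Aᵀ).mulVecLin) = 0 := by omega
    exact Submodule.finrank_eq_zero.mp this
  have : (Aᵀ).mulVecLin v = 0 := by
    simp [Matrix.mulVecLin_apply, ← hv, Matrix.mulVec_transpose]
  simpa using (LinearMap.ker_eq_bot.mp hker) (by simpa using this)

lemma aux_mulVec_surj {ι κ : Type*} [Fintype ι] [Fintype κ]
    (A : Matrix ι κ ℝ) (h : A.rank = Fintype.card ι) :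
    Surjective A.mulVec := by
  have : LinearMap.range A.mulVecLin = ⊤ := by
    apply Submodule.eq_top_of_finrank_eq
    rw [show Module.finrank ℝ (LinearMap.range A.mulVecLin) = A.rank from rfl, h,
      Module.finrank_pi]
  intro w
  obtain ⟨g, hg⟩ := (LinearMap.range_eq_top.mp this) w
  exact ⟨g, hg⟩

lemma swap_helper {ι κ : Type*} [Fintype ι] [Fintype κ]
    (η : ι → ℝ) (P : Matrix ι κ ℝ) (u : κ → ℝ) :
    ∑ a, (∑ i, η i * P i a) * u a = ∑ i, η i * P.mulVec u i := by
  simp only [Matrix.mulVec, dotProduct, Finset.sum_mul, Finset.mul_sum, mul_assoc]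
  exact Finset.sum_comm

lemma sum_mulVec_helper {ι κ : Type*} [Fintype ι] [Fintype κ]
    (s : Finset ℕ) (f : ℕ → Matrix ι κ ℝ) (z : κ → ℝ) :
    (∑ l ∈ s, f l).mulVec z = ∑ l ∈ s, (f l).mulVec z := by
  funext i
  simp only [Matrix.mulVec, dotProduct, Matrix.sum_apply, Finset.sum_apply,
    Finset.sum_mul]
  exact Finset.sum_comm

lemma triple_swap {α β γ : Type*} [Fintype β] (s1 : Finset α) (s3 : Finset γ)
    (f : α → β → γ → ℝ) :
    ∑ x ∈ s1, ∑ y : β, ∑ z ∈ s3, f x y z = ∑ z ∈ s3, ∑ x ∈ s1, ∑ y : β, f x y z := by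
  rw [show (∑ x ∈ s1, ∑ y : β, ∑ z ∈ s3, f x y z)
      = ∑ x ∈ s1, ∑ z ∈ s3, ∑ y : β, f x y z from
    Finset.sum_congr rfl fun x _ => Finset.sum_comm]
  exact Finset.sum_comm


lemma aux_mulVec_inj {ι κ : Type*} [Fintype ι] [Fintype κ]
    (A : Matrix ι κ ℝ) (h : A.rank = Fintype.card κ) {v : κ → ℝ}
    (hv : A.mulVec v = 0) : v = 0 := by
  have hker : LinearMap.ker A.mulVecLin = ⊥ := by
    have h1 := LinearMap.finrank_range_add_finrank_ker A.mulVecLin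
    rw [show Module.finrank ℝ (LinearMap.range A.mulVecLin) = A.rank from rfl, h,
      Module.finrank_pi] at h1
    have : Module.finrank ℝ (LinearMap.ker A.mulVecLin) = 0 := by omega
    exact Submodule.finrank_eq_zero.mp this
  simpa using (LinearMap.ker_eq_bot.mp hker) (by simpa using hv)

lemma mulVec_sum_comm {ι κ : Type*} [Fintype ι] {M : ℕ} (P : Matrix κ ι ℝ)
    (w : Fin M → ι → ℝ) (g : Fin M → ℝ) (b : κ) :
    ∑ j, P.mulVec (w j) b * g j = P.mulVec (fun i => ∑ j, w j i * g j) b := by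
  simp only [Matrix.mulVec, dotProduct, Finset.sum_mul, Finset.mul_sum, mul_assoc]
  exact Finset.sum_comm

lemma key_surj {nx m : ℕ}
    (A : Matrix (Fin nx) (Fin nx) ℝ) (B : Matrix (Fin nx) (Fin m) ℝ)
    (ud : ℕ → Fin m → ℝ) (xd : ℕ → Fin nx → ℝ) (T K : ℕ)
    (hxdyn : ∀ k < K, xd (k + 1) = A.mulVec (xd k) + B.mulVec (ud k))
    (hK : T + nx ≤ K) (hnxT : nx ≤ T)
    (hctrb : (ctrbMat A B).rank = nx)
    (hPE : (Hankel (T + nx) K ud).rank = m * (T + nx)) :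
    ∀ (x0 : Fin nx → ℝ) (w : Fin T × Fin m → ℝ),
      ∃ g : Fin (K - T + 1) → ℝ,
        (∀ i, x0 i = ∑ j : Fin (K - T + 1), xd (j : ℕ) i * g j) ∧
        (∀ q : Fin T × Fin m,
          w q = ∑ j : Fin (K - T + 1), ud ((q.1 : ℕ) + (j : ℕ)) q.2 * g j) := by
  classical
  set Φ : Matrix (Fin nx ⊕ Fin T × Fin m) (Fin (K - T + 1)) ℝ :=
    fun r j => Sum.elim (fun i => xd (j : ℕ) i) (fun q => ud ((q.1 : ℕ) + (j : ℕ)) q.2) r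
    with hΦ
  have hlker : ∀ v : (Fin nx ⊕ Fin T × Fin m) → ℝ, v ᵥ* Φ = 0 → v = 0 := by
    intro v hv
    set η : Fin nx → ℝ := fun i => v (Sum.inl i) with hη
    set ξ : ℕ → Fin m → ℝ :=
      fun s a => if h : s < T then v (Sum.inr (⟨s, h⟩, a)) else 0 with hξ
    have hv0 : ∀ j : ℕ, j + T ≤ K →
        (∑ i, η i * xd j i) + ∑ s ∈ range T, ∑ a, ξ s a * ud (j + s) a = 0 := by
      intro j hj
      have hjlt : j < K - T + 1 := by omega
      have h1 := congrFun hv ⟨j, hjlt⟩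
      simp only [Matrix.vecMul, dotProduct, Fintype.sum_sum_type, Fintype.sum_prod_type,
        hΦ, Sum.elim_inl, Sum.elim_inr, Pi.zero_apply] at h1
      rw [← h1]
      congr 1
      rw [← Fin.sum_univ_eq_sum_range (fun s => ∑ a, ξ s a * ud (j + s) a) T]
      refine Finset.sum_congr rfl fun s _ => Finset.sum_congr rfl fun a _ => ?_
      rw [hξ]
      simp only [s.isLt, dif_pos, Fin.eta]
      rw [Nat.add_comm j s]
    set θ : ℕ → ℕ → Fin m → ℝ := fun l s a =>
      if s < l then ∑ i, η i * (A ^ (l - 1 - s) * B) i a else ξ (s - l) a with hθdef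
    have hθshift : ∀ l s a, θ (l + 1) (s + 1) a = θ l s a := by
      intro l s a
      simp only [hθdef]
      by_cases h : s < l
      · rw [if_pos (by omega : s + 1 < l + 1), if_pos h,
          show l + 1 - 1 - (s + 1) = l - 1 - s from by omega]
      · rw [if_neg (by omega : ¬(s + 1 < l + 1)), if_neg h,
          show s + 1 - (l + 1) = s - l from by omega]
    have hQ : ∀ l j, j + T + l ≤ K →
        (∑ i, η i * (A ^ l).mulVec (xd j) i)
          + ∑ s ∈ range (l + T), ∑ a, θ l s a * ud (j + s) a = 0 := by
      intro l
      induction l with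
      | zero =>
        intro j hj
        have := hv0 j (by omega)
        simpa [hθdef, Matrix.one_mulVec] using this
      | succ l ih =>
        intro j hj
        have h1 := ih (j + 1) (by omega)
        have hxstep := hxdyn j (by omega)
        have hsplit : (A ^ l).mulVec (xd (j + 1))
            = (A ^ (l + 1)).mulVec (xd j) + (A ^ l * B).mulVec (ud j) := by
          rw [hxstep, Matrix.mulVec_add, Matrix.mulVec_mulVec, Matrix.mulVec_mulVec,
            ← pow_succ]
        rw [hsplit] at h1
        simp only [Pi.add_apply, mul_add, Finset.sum_add_distrib] at h1
        have hgoal : ∑ s ∈ range (l + 1 + T), ∑ a, θ (l + 1) s a * ud (j + s) a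
            = (∑ a, θ (l + 1) 0 a * ud (j + 0) a)
              + ∑ s ∈ range (l + T), ∑ a, θ l s a * ud (j + 1 + s) a := by
          rw [show l + 1 + T = (l + T) + 1 from by omega, Finset.sum_range_succ']
          have e1 : ∑ s ∈ range (l + T), ∑ a, θ (l + 1) (s + 1) a * ud (j + (s + 1)) a
              = ∑ s ∈ range (l + T), ∑ a, θ l s a * ud (j + 1 + s) a := by
            refine Finset.sum_congr rfl fun s _ => Finset.sum_congr rfl fun a _ => ?_
            rw [hθshift, show j + (s + 1) = j + 1 + s from by omega]
          rw [e1, add_comm]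
        have hθ0 : ∀ a, θ (l + 1) 0 a = ∑ i, η i * (A ^ l * B) i a := by
          intro a
          simp only [hθdef]
          rw [if_pos (Nat.succ_pos l)]
          norm_num
        have hswap : (∑ a, θ (l + 1) 0 a * ud (j + 0) a)
            = ∑ i, η i * (A ^ l * B).mulVec (ud j) i := by
          rw [show (∑ a, θ (l + 1) 0 a * ud (j + 0) a)
            = ∑ a, (∑ i, η i * (A ^ l * B) i a) * ud j a from
              Finset.sum_congr rfl fun a _ => by rw [hθ0, Nat.add_zero]]
          exact swap_helper η (A ^ l * B) (ud j)
        rw [hgoal, hswap]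
        linarith [h1]
    -- Cayley–Hamilton
    set c : ℕ → ℝ := fun l => -(A.charpoly.coeff l) with hc
    have hCH : A ^ nx = ∑ l ∈ range nx, c l • A ^ l := by
      have h0 := Matrix.aeval_self_charpoly A
      rw [Polynomial.aeval_eq_sum_range] at h0
      have hdeg : A.charpoly.natDegree = nx := by
        rw [Matrix.charpoly_natDegree_eq_dim, Fintype.card_fin]
      rw [hdeg, Finset.sum_range_succ] at h0
      have hmon : A.charpoly.coeff nx = 1 := by
        have := (Matrix.charpoly_monic A).coeff_natDegree
        rwa [hdeg] at this
      rw [hmon, one_smul] at h0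
      have h2 : A ^ nx = -∑ l ∈ range nx, A.charpoly.coeff l • A ^ l :=
        eq_neg_of_add_eq_zero_right h0
      rw [h2, ← Finset.sum_neg_distrib]
      exact Finset.sum_congr rfl fun l _ => by rw [hc]; simp [neg_smul]
    set S : ℕ → ℕ → ℝ := fun l j => ∑ s ∈ range (l + T), ∑ a, θ l s a * ud (j + s) a
      with hSdef
    set F : ℕ → ℕ → ℝ := fun l j => ∑ i, η i * (A ^ l).mulVec (xd j) i with hFdef
    have hFS : ∀ l j, j + T + l ≤ K → F l j + S l j = 0 := hQ
    have hFlin : ∀ j, F nx j = ∑ l ∈ range nx, c l * F l j := by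
      intro j
      simp only [hFdef]
      rw [hCH, sum_mulVec_helper]
      rw [show (∑ i, η i * (∑ l ∈ range nx, (c l • A ^ l).mulVec (xd j)) i)
          = ∑ i, ∑ l ∈ range nx, η i * (c l * (A ^ l).mulVec (xd j) i) from by
        refine Finset.sum_congr rfl fun i _ => ?_
        rw [Finset.sum_apply, Finset.mul_sum]
        refine Finset.sum_congr rfl fun l _ => ?_
        rw [Matrix.smul_mulVec, Pi.smul_apply, smul_eq_mul]]
      rw [Finset.sum_comm]
      refine Finset.sum_congr rfl fun l _ => ?_
      rw [Finset.mul_sum]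
      exact Finset.sum_congr rfl fun i _ => by ring
    have hS0 : ∀ j, j + T + nx ≤ K → S nx j - ∑ l ∈ range nx, c l * S l j = 0 := by
      intro j hj
      have h1 := hFS nx j hj
      have h2 : ∑ l ∈ range nx, c l * F l j = -∑ l ∈ range nx, c l * S l j := by
        rw [← Finset.sum_neg_distrib]
        refine Finset.sum_congr rfl fun l hl => ?_
        have h4 := hFS l j (by simp only [Finset.mem_range] at hl; omega)
        have h5 : F l j = -S l j := by linarith
        rw [h5]; ring
      have h3 := hFlin j
      rw [h2] at h3
      linarith
    set Θ : ℕ → Fin m → ℝ := fun s a =>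
      θ nx s a - ∑ l ∈ range nx, c l * (if s < l + T then θ l s a else 0) with hΘdef
    have hΘsum : ∀ j : ℕ, j + T + nx ≤ K →
        ∑ s ∈ range (nx + T), ∑ a, Θ s a * ud (j + s) a = 0 := by
      intro j hj
      have hsub : ∀ l, l < nx →
          ∑ s ∈ range (nx + T), ∑ a, (c l * (if s < l + T then θ l s a else 0)) * ud (j + s) a
            = c l * S l j := by
        intro l hl
        have h1 : ∑ s ∈ range (nx + T), ∑ a,
            (c l * (if s < l + T then θ l s a else 0)) * ud (j + s) a
            = ∑ s ∈ range (l + T), ∑ a, (c l * θ l s a) * ud (j + s) a := by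
          rw [← Finset.sum_subset (Finset.range_subset_range.mpr (by omega : l + T ≤ nx + T))]
          · refine Finset.sum_congr rfl fun s hs => ?_
            simp only [Finset.mem_range] at hs
            refine Finset.sum_congr rfl fun a _ => by rw [if_pos hs]
          · intro s _ hs
            simp only [Finset.mem_range] at hs
            refine Finset.sum_eq_zero fun a _ => by rw [if_neg (by omega)]; ring
        rw [h1, hSdef]
        simp only [Finset.mul_sum]
        exact Finset.sum_congr rfl fun s _ => Finset.sum_congr rfl fun a _ => by ring
      have hexp : ∑ s ∈ range (nx + T), ∑ a, Θ s a * ud (j + s) a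
          = S nx j - ∑ l ∈ range nx, c l * S l j := by
        simp only [hΘdef, sub_mul, Finset.sum_mul, Finset.sum_sub_distrib]
        congr 1
        rw [triple_swap (range (nx + T)) (range nx)
          (fun s a l => (c l * if s < l + T then θ l s a else 0) * ud (j + s) a)]
        exact Finset.sum_congr rfl fun l hl =>
          hsub l (by simpa using hl)
      rw [hexp]
      exact hS0 j hj
    have hrankrows : (Hankel (T + nx) K ud).rank = Fintype.card (Fin (T + nx) × Fin m) := by
      rw [hPE]; simp [Fintype.card_prod, Nat.mul_comm]
    have hζ0 : (fun q : Fin (T + nx) × Fin m => Θ (q.1 : ℕ) q.2) = 0 := by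
      apply aux_vecMul_inj (Hankel (T + nx) K ud) hrankrows
      funext j
      have hjK : (j : ℕ) + T + nx ≤ K := by
        have := j.isLt
        omega
      have h2 := hΘsum j hjK
      have h3 : ∑ s ∈ range (T + nx), (∑ a, Θ s a * ud ((j : ℕ) + s) a) = 0 := by
        rw [show range (T + nx) = range (nx + T) from by rw [Nat.add_comm]]; exact h2
      rw [← Fin.sum_univ_eq_sum_range (fun s => ∑ a, Θ s a * ud ((j : ℕ) + s) a) (T + nx)] at h3
      simp only [Matrix.vecMul, dotProduct, Fintype.sum_prod_type, Hankel, Pi.zero_apply]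
      rw [← h3]
      exact Finset.sum_congr rfl fun s _ => Finset.sum_congr rfl fun a _ => by
        rw [Nat.add_comm (s : ℕ) (j : ℕ)]
    have hΘzero : ∀ s, s < T + nx → ∀ a, Θ s a = 0 := by
      intro s hs a
      have := congrFun hζ0 (⟨s, hs⟩, a)
      simpa using this
    have hξstep : ∀ i, (∀ i', i < i' → ∀ a, ξ i' a = 0) → ∀ a, ξ i a = 0 := by
      intro i hi a
      by_cases hiT : i < T
      · have h := hΘzero (nx + i) (by omega) a
        simp only [hΘdef] at h
        have e1 : θ nx (nx + i) a = ξ i a := by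
          simp only [hθdef]
          rw [if_neg (by omega : ¬(nx + i < nx)), show nx + i - nx = i from by omega]
        have e2 : ∑ l ∈ range nx, c l * (if nx + i < l + T then θ l (nx + i) a else 0) = 0 :=
          Finset.sum_eq_zero fun l hl => by
            simp only [Finset.mem_range] at hl
            by_cases hc2 : nx + i < l + T
            · rw [if_pos hc2]
              have e3 : θ l (nx + i) a = ξ (nx + i - l) a := by
                simp only [hθdef]; rw [if_neg (by omega)]
              rw [e3, hi (nx + i - l) (by omega) a, mul_zero]
            · rw [if_neg hc2, mul_zero]
        rw [e1, e2] at h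
        linarith
      · simp only [hξ]; rw [dif_neg hiT]
    have hξzero : ∀ i a, ξ i a = 0 := by
      have hd : ∀ d i, T ≤ i + d → ∀ a, ξ i a = 0 := by
        intro d
        induction d with
        | zero => intro i hiT a; simp only [hξ]; rw [dif_neg (by omega)]
        | succ d ihd =>
          intro i hiT a
          exact hξstep i (fun i' hii' a' => ihd i' (by omega) a') a
      intro i a
      exact hd T i (by omega) a
    have hηB : ∀ k, k < nx → ∀ a, ∑ i, η i * (A ^ k * B) i a = 0 := by
      intro k
      induction k using Nat.strong_induction_on with
      | _ k ihk =>
        intro hk a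
        have h := hΘzero (nx - 1 - k) (by omega) a
        simp only [hΘdef] at h
        have e1 : θ nx (nx - 1 - k) a = ∑ i, η i * (A ^ k * B) i a := by
          simp only [hθdef]
          rw [if_pos (by omega : nx - 1 - k < nx),
            show nx - 1 - (nx - 1 - k) = k from by omega]
        have e2 : ∑ l ∈ range nx,
            c l * (if nx - 1 - k < l + T then θ l (nx - 1 - k) a else 0) = 0 :=
          Finset.sum_eq_zero fun l hl => by
            simp only [Finset.mem_range] at hl
            by_cases hc2 : nx - 1 - k < l + T
            · rw [if_pos hc2]
              by_cases hc3 : nx - 1 - k < l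
              · have e3 : θ l (nx - 1 - k) a
                    = ∑ i, η i * (A ^ (l - 1 - (nx - 1 - k)) * B) i a := by
                  simp only [hθdef]; rw [if_pos hc3]
                rw [e3, ihk (l - 1 - (nx - 1 - k)) (by omega) (by omega) a, mul_zero]
              · have e3 : θ l (nx - 1 - k) a = ξ (nx - 1 - k - l) a := by
                  simp only [hθdef]; rw [if_neg hc3]
                rw [e3, hξzero _ a, mul_zero]
            · rw [if_neg hc2, mul_zero]
        rw [e1, e2] at h
        linarith
    have hη0 : η = 0 := by
      apply aux_vecMul_inj (ctrbMat A B) (by rw [hctrb]; exact (Fintype.card_fin nx).symm)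
      funext q
      have h := hηB (q.1 : ℕ) q.1.isLt q.2
      simpa [Matrix.vecMul, dotProduct, ctrbMat] using h
    funext r
    cases r with
    | inl i => exact congrFun hη0 i
    | inr q =>
      have h := hξzero (q.1 : ℕ) q.2
      simp only [hξ] at h
      rw [dif_pos q.1.isLt] at h
      simpa using h
  have hrank : Φ.rank = Fintype.card (Fin nx ⊕ Fin T × Fin m) := by
    rw [← Matrix.rank_transpose]
    have hker : LinearMap.ker (Φᵀ).mulVecLin = ⊥ := by
      rw [LinearMap.ker_eq_bot']
      intro v hv'
      apply hlker
      have h5 : Φᵀ *ᵥ v = 0 := hv'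
      rw [Matrix.mulVec_transpose] at h5
      exact h5
    have h1 := LinearMap.finrank_range_add_finrank_ker (Φᵀ).mulVecLin
    rw [hker, finrank_bot, add_zero, Module.finrank_pi] at h1
    exact h1
  intro x0 w
  obtain ⟨g, hg⟩ := aux_mulVec_surj Φ hrank (Sum.elim x0 w)
  refine ⟨g, fun i => ?_, fun q => ?_⟩
  · have h := congrFun hg (Sum.inl i)
    simp only [Matrix.mulVec, dotProduct, hΦ, Sum.elim_inl] at h
    rw [← h]
  · have h := congrFun hg (Sum.inr q)
    simp only [Matrix.mulVec, dotProduct, hΦ, Sum.elim_inr] at h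
    rw [← h]

-- === trajectory helpers (appended after key_surj content for testing) ===
lemma glue_of_lt {ι : Type*} {Tp Tf : ℕ} (past : ℕ → ι → ℝ) (fut : Fin Tf → ι → ℝ)
    {k : ℕ} (hk : k < Tp) : glue Tp Tf past fut k = past k := by
  unfold glue; rw [if_pos hk]

lemma glue_of_ge {ι : Type*} {Tp Tf : ℕ} (past : ℕ → ι → ℝ) (fut : Fin Tf → ι → ℝ)
    {k : ℕ} (h1 : Tp ≤ k) (h2 : k - Tp < Tf) :
    glue Tp Tf past fut k = fut ⟨k - Tp, h2⟩ := by
  unfold glue; rw [if_neg (by omega), dif_pos h2]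

lemma glue_add {ι : Type*} {Tp Tf : ℕ} (past : ℕ → ι → ℝ) (fut : Fin Tf → ι → ℝ)
    (i : Fin Tf) : glue Tp Tf past fut (Tp + (i : ℕ)) = fut i := by
  have h2 : Tp + (i : ℕ) - Tp < Tf := by
    rw [Nat.add_sub_cancel_left]; exact i.isLt
  rw [glue_of_ge past fut (Nat.le_add_right _ _) h2]
  have h3 : (⟨Tp + (i : ℕ) - Tp, h2⟩ : Fin Tf) = i := by
    ext
    simp
  rw [h3]

lemma state_det {nx : ℕ} {ι : Type*} [Fintype ι]
    (A : Matrix (Fin nx) (Fin nx) ℝ) (B : Matrix (Fin nx) ι ℝ)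
    (T : ℕ) (u : ℕ → ι → ℝ) (x x' : ℕ → Fin nx → ℝ)
    (hx : ∀ k < T, x (k + 1) = A.mulVec (x k) + B.mulVec (u k))
    (hx' : ∀ k < T, x' (k + 1) = A.mulVec (x' k) + B.mulVec (u k))
    (h0 : x 0 = x' 0) : ∀ k, k ≤ T → x k = x' k := by
  intro k
  induction k with
  | zero => intro _; exact h0
  | succ k ih =>
    intro hk
    rw [hx k (by omega), hx' k (by omega), ih (by omega)]

/-- **Data-driven simulation.** Given a length-`K` data trajectory of a
controllable and observable LTI system whose input is persistently exciting of
order `Tp + Tf + n_x`, a past length-`Tp` trajectory `(ū_p, y_p)` with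
`Tp ≥ n_x`, and a future input `ū_f`: (a) there is a unique future output `y_f`
such that the concatenated pair is a length-`(Tp+Tf)` trajectory, and (b) `y_f`
is this unique continuation iff a common `g` reproduces `ū_p, ū_f, y_p, y_f`
from the partitioned Hankel matrices. -/
theorem statement1
    {nx m p K Tp Tf : ℕ}
    (A : Matrix (Fin nx) (Fin nx) ℝ) (B : Matrix (Fin nx) (Fin m) ℝ)
    (C : Matrix (Fin p) (Fin nx) ℝ) (D : Matrix (Fin p) (Fin m) ℝ)
    (ud : ℕ → Fin m → ℝ) (yd : ℕ → Fin p → ℝ)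
    (hTpTfK : Tp + Tf ≤ K)
    (hTp : nx ≤ Tp)
    (hdata : IsTraj A B C D K ud yd)
    (hctrb : (ctrbMat A B).rank = nx)
    (hobsv : (obsvMat A C).rank = nx)
    (hPE : (Hankel (Tp + Tf + nx) K ud).rank = m * (Tp + Tf + nx))
    (up : ℕ → Fin m → ℝ) (yp : ℕ → Fin p → ℝ)
    (hpast : IsTraj A B C D Tp up yp)
    (uf : Fin Tf → Fin m → ℝ) :
    (∃! yf : Fin Tf → Fin p → ℝ,
        IsTraj A B C D (Tp + Tf) (glue Tp Tf up uf) (glue Tp Tf yp yf)) ∧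
    (∀ yf : Fin Tf → Fin p → ℝ,
        IsTraj A B C D (Tp + Tf) (glue Tp Tf up uf) (glue Tp Tf yp yf) ↔
        ∃ g : Fin (K - (Tp + Tf) + 1) → ℝ,
          stack Tp up = (HankelPast Tp (K - (Tp + Tf) + 1) ud).mulVec g ∧
          (fun q : Fin Tf × Fin m => uf q.1 q.2) =
            (HankelFut Tp Tf (K - (Tp + Tf) + 1) ud).mulVec g ∧
          stack Tp yp = (HankelPast Tp (K - (Tp + Tf) + 1) yd).mulVec g ∧
          (fun q : Fin Tf × Fin p => yf q.1 q.2) =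
            (HankelFut Tp Tf (K - (Tp + Tf) + 1) yd).mulVec g) := by
  classical
  obtain ⟨xd, hxd⟩ := hdata
  have hxdyn : ∀ k < K, xd (k + 1) = A.mulVec (xd k) + B.mulVec (ud k) :=
    fun k hk => (hxd k hk).1
  have hyout : ∀ k < K, yd k = C.mulVec (xd k) + D.mulVec (ud k) :=
    fun k hk => (hxd k hk).2
  set T := Tp + Tf with hT
  -- T + nx ≤ K
  have hK : T + nx ≤ K := by
    by_cases hm : m = 0
    · have h1 := Matrix.rank_le_card_width (ctrbMat A B)
      rw [hctrb] at h1
      subst hm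
      simp [Fintype.card_prod] at h1
      omega
    · by_contra hcon
      have h1 := Matrix.rank_le_card_width (Hankel (T + nx) K ud)
      rw [hPE, Fintype.card_fin] at h1
      have h2 : K - (T + nx) = 0 := by omega
      rw [h2] at h1
      have h3 : 1 ≤ nx := by omega
      have h4 : T + nx ≤ m * (T + nx) := Nat.le_mul_of_pos_left _ (by omega)
      omega
  have hsurj := key_surj A B ud xd T K hxdyn hK (by omega) hctrb hPE
  set ugl := glue Tp Tf up uf with hugl
  -- combination evolution lemmas
  have hXstep : ∀ (g : Fin (K - T + 1) → ℝ) (k : ℕ), k < T →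
      (fun i => ∑ j : Fin (K - T + 1), xd (k + 1 + (j : ℕ)) i * g j)
        = A.mulVec (fun i => ∑ j : Fin (K - T + 1), xd (k + (j : ℕ)) i * g j)
          + B.mulVec (fun a => ∑ j : Fin (K - T + 1), ud (k + (j : ℕ)) a * g j) := by
    intro g k hk
    funext i
    have hstep1 : ∑ j : Fin (K - T + 1), xd (k + 1 + (j : ℕ)) i * g j
        = (∑ j : Fin (K - T + 1), A.mulVec (xd (k + (j : ℕ))) i * g j)
          + ∑ j : Fin (K - T + 1), B.mulVec (ud (k + (j : ℕ))) i * g j := by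
      rw [← Finset.sum_add_distrib]
      refine Finset.sum_congr rfl fun j _ => ?_
      have hj : k + (j : ℕ) < K := by have := j.isLt; omega
      rw [show k + 1 + (j : ℕ) = (k + (j : ℕ)) + 1 from by omega, hxdyn _ hj]
      simp only [Pi.add_apply]
      ring
    rw [hstep1, mulVec_sum_comm A (fun j => xd (k + (j : ℕ))) g i,
      mulVec_sum_comm B (fun j => ud (k + (j : ℕ))) g i]
    rfl
  have hYcomb : ∀ (g : Fin (K - T + 1) → ℝ) (k : ℕ), k < T →
      (fun b => ∑ j : Fin (K - T + 1), yd (k + (j : ℕ)) b * g j)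
        = C.mulVec (fun i => ∑ j : Fin (K - T + 1), xd (k + (j : ℕ)) i * g j)
          + D.mulVec (fun a => ∑ j : Fin (K - T + 1), ud (k + (j : ℕ)) a * g j) := by
    intro g k hk
    funext b
    have hstep1 : ∑ j : Fin (K - T + 1), yd (k + (j : ℕ)) b * g j
        = (∑ j : Fin (K - T + 1), C.mulVec (xd (k + (j : ℕ))) b * g j)
          + ∑ j : Fin (K - T + 1), D.mulVec (ud (k + (j : ℕ))) b * g j := by
      rw [← Finset.sum_add_distrib]
      refine Finset.sum_congr rfl fun j _ => ?_
      have hj : k + (j : ℕ) < K := by have := j.isLt; omega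
      rw [hyout _ hj]
      simp only [Pi.add_apply]
      ring
    rw [hstep1, mulVec_sum_comm C (fun j => xd (k + (j : ℕ))) g b,
      mulVec_sum_comm D (fun j => ud (k + (j : ℕ))) g b]
    rfl
  -- part (b): the equivalence
  have hmain : ∀ yf : Fin Tf → Fin p → ℝ,
      IsTraj A B C D T ugl (glue Tp Tf yp yf) ↔
      ∃ g : Fin (K - T + 1) → ℝ,
        stack Tp up = (HankelPast Tp (K - T + 1) ud).mulVec g ∧
        (fun q : Fin Tf × Fin m => uf q.1 q.2) =
          (HankelFut Tp Tf (K - T + 1) ud).mulVec g ∧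
        stack Tp yp = (HankelPast Tp (K - T + 1) yd).mulVec g ∧
        (fun q : Fin Tf × Fin p => yf q.1 q.2) =
          (HankelFut Tp Tf (K - T + 1) yd).mulVec g := by
    intro yf
    set ygl := glue Tp Tf yp yf with hygl
    constructor
    · rintro ⟨x, hx⟩
      obtain ⟨g, hg1, hg2⟩ := hsurj (x 0) (fun q => ugl (q.1 : ℕ) q.2)
      have hu : ∀ (k : ℕ) (hk : k < T) (a : Fin m),
          ugl k a = ∑ j : Fin (K - T + 1), ud (k + (j : ℕ)) a * g j :=
        fun k hk a => hg2 (⟨k, hk⟩, a)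
      set xt : ℕ → Fin nx → ℝ :=
        fun k i => ∑ j : Fin (K - T + 1), xd (k + (j : ℕ)) i * g j with hxt
      have hxtstep : ∀ k, k < T → xt (k + 1) = A.mulVec (xt k) + B.mulVec (ugl k) := by
        intro k hk
        have h1 := hXstep g k hk
        have h2 : (fun a => ∑ j : Fin (K - T + 1), ud (k + (j : ℕ)) a * g j) = ugl k :=
          funext fun a => (hu k hk a).symm
        rw [h2] at h1
        exact h1
      have hx0 : x 0 = xt 0 := by
        funext i
        have h1 := hg1 i
        have h2 : (∑ j : Fin (K - T + 1), xd (0 + (j : ℕ)) i * g j)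
            = ∑ j : Fin (K - T + 1), xd ((j : ℕ)) i * g j := by simp
        exact h1.trans h2.symm
      have hxeq : ∀ k, k ≤ T → x k = xt k :=
        state_det A B T ugl x xt (fun k hk => (hx k hk).1) hxtstep hx0
      have hy : ∀ (k : ℕ) (hk : k < T) (b : Fin p),
          ygl k b = ∑ j : Fin (K - T + 1), yd (k + (j : ℕ)) b * g j := by
        intro k hk b
        have h2 := hYcomb g k hk
        have h3 : (fun a => ∑ j : Fin (K - T + 1), ud (k + (j : ℕ)) a * g j) = ugl k :=
          funext fun a => (hu k hk a).symm
        rw [h3] at h2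
        have h4 : ygl k = C.mulVec (xt k) + D.mulVec (ugl k) := by
          rw [(hx k hk).2, hxeq k (le_of_lt hk)]
        rw [h4]
        exact congrFun h2.symm b
      refine ⟨g, ?_, ?_, ?_, ?_⟩
      · funext q
        have hq : (q.1 : ℕ) < T := by omega
        have h5 := hu q.1 hq q.2
        rw [hugl, glue_of_lt up uf q.1.isLt] at h5
        simp only [stack, HankelPast, Matrix.mulVec, dotProduct]
        exact h5
      · funext q
        have hq : Tp + (q.1 : ℕ) < T := by omega
        have h5 := hu (Tp + (q.1 : ℕ)) hq q.2
        rw [hugl, glue_add up uf q.1] at h5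
        simp only [Matrix.mulVec, dotProduct, HankelFut]
        exact h5
      · funext q
        have hq : (q.1 : ℕ) < T := by omega
        have h5 := hy q.1 hq q.2
        rw [hygl, glue_of_lt yp yf q.1.isLt] at h5
        simp only [stack, HankelPast, Matrix.mulVec, dotProduct]
        exact h5
      · funext q
        have hq : Tp + (q.1 : ℕ) < T := by omega
        have h5 := hy (Tp + (q.1 : ℕ)) hq q.2
        rw [hygl, glue_add yp yf q.1] at h5
        simp only [Matrix.mulVec, dotProduct, HankelFut]
        exact h5
    · rintro ⟨g, hgu_p, hgu_f, hgy_p, hgy_f⟩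
      have hu : ∀ k, k < T →
          ugl k = fun a => ∑ j : Fin (K - T + 1), ud (k + (j : ℕ)) a * g j := by
        intro k hk
        funext a
        by_cases hkp : k < Tp
        · have h1 := congrFun hgu_p (⟨k, hkp⟩, a)
          simp only [stack, HankelPast, Matrix.mulVec, dotProduct] at h1
          rw [hugl, glue_of_lt up uf hkp]
          exact h1
        · have h2 : k - Tp < Tf := by omega
          have h1 := congrFun hgu_f (⟨k - Tp, h2⟩, a)
          simp only [HankelFut, Matrix.mulVec, dotProduct] at h1
          rw [show Tp + (k - Tp) = k from by omega] at h1
          rw [hugl, glue_of_ge up uf (by omega) h2]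
          exact h1
      have hyg : ∀ k, k < T →
          ygl k = fun b => ∑ j : Fin (K - T + 1), yd (k + (j : ℕ)) b * g j := by
        intro k hk
        funext b
        by_cases hkp : k < Tp
        · have h1 := congrFun hgy_p (⟨k, hkp⟩, b)
          simp only [stack, HankelPast, Matrix.mulVec, dotProduct] at h1
          rw [hygl, glue_of_lt yp yf hkp]
          exact h1
        · have h2 : k - Tp < Tf := by omega
          have h1 := congrFun hgy_f (⟨k - Tp, h2⟩, b)
          simp only [HankelFut, Matrix.mulVec, dotProduct] at h1
          rw [show Tp + (k - Tp) = k from by omega] at h1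
          rw [hygl, glue_of_ge yp yf (by omega) h2]
          exact h1
      refine ⟨fun k i => ∑ j : Fin (K - T + 1), xd (k + (j : ℕ)) i * g j,
        fun k hk => ⟨?_, ?_⟩⟩
      · rw [hu k hk]
        exact hXstep g k hk
      · rw [hyg k hk, hu k hk]
        exact hYcomb g k hk
  -- observability injectivity
  have hobs_inj : ∀ z : Fin nx → ℝ,
      (∀ k, k < nx → (C * A ^ k).mulVec z = 0) → z = 0 := by
    intro z hz
    apply aux_mulVec_inj (obsvMat A C) (by rw [hobsv]; exact (Fintype.card_fin nx).symm)
    funext q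
    have h1 := congrFun (hz (q.1 : ℕ) q.1.isLt) q.2
    simpa [obsvMat, Matrix.mulVec, dotProduct] using h1
  -- part (a)
  obtain ⟨xp, hxp⟩ := hpast
  set xs : ℕ → Fin nx → ℝ :=
    fun k => Nat.rec (xp 0) (fun k xk => A.mulVec xk + B.mulVec (ugl k)) k with hxs
  have hxsstep : ∀ k, xs (k + 1) = A.mulVec (xs k) + B.mulVec (ugl k) := fun k => rfl
  have hagree : ∀ k, k ≤ Tp → xs k = xp k := by
    intro k
    induction k with
    | zero => intro _; rfl
    | succ k ih =>
      intro hk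
      rw [hxsstep, ih (by omega), hugl, glue_of_lt up uf (by omega : k < Tp)]
      exact ((hxp k (by omega)).1).symm
  set yf0 : Fin Tf → Fin p → ℝ :=
    fun i => C.mulVec (xs (Tp + (i : ℕ))) + D.mulVec (uf i) with hyf0
  have htraj0 : IsTraj A B C D T ugl (glue Tp Tf yp yf0) := by
    refine ⟨xs, fun k hk => ⟨hxsstep k, ?_⟩⟩
    by_cases hkp : k < Tp
    · rw [glue_of_lt yp yf0 hkp, hagree k (by omega), hugl, glue_of_lt up uf hkp]
      exact (hxp k hkp).2
    · have h1 : Tp ≤ k := by omega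
      have h2 : k - Tp < Tf := by omega
      rw [glue_of_ge yp yf0 h1 h2, hyf0]
      simp only
      rw [show Tp + (k - Tp) = k from by omega]
      congr 1
      rw [hugl, glue_of_ge up uf h1 h2]
  refine ⟨⟨yf0, htraj0, ?_⟩, hmain⟩
  rintro yf' ⟨x', hx'⟩
  have hdstep : ∀ k, k < T →
      (fun i => x' (k + 1) i - xs (k + 1) i) = A.mulVec (fun i => x' k i - xs k i) := by
    intro k hk
    funext i
    rw [(hx' k hk).1, hxsstep k]
    simp only [Pi.add_apply, Matrix.mulVec, dotProduct, mul_sub, Finset.sum_sub_distrib]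
    ring
  have hdpow : ∀ k, k ≤ T →
      (fun i => x' k i - xs k i) = (A ^ k).mulVec (fun i => x' 0 i - xs 0 i) := by
    intro k
    induction k with
    | zero => intro _; rw [pow_zero, Matrix.one_mulVec]
    | succ k ih =>
      intro hk
      rw [hdstep k (by omega), ih (by omega), Matrix.mulVec_mulVec, ← pow_succ']
  have hCzero : ∀ k, k < nx → (C * A ^ k).mulVec (fun i => x' 0 i - xs 0 i) = 0 := by
    intro k hk
    have hkTp : k < Tp := by omega
    have h1 := (hx' k (by omega)).2
    rw [glue_of_lt yp yf' hkTp] at h1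
    have h3 : yp k = C.mulVec (xs k) + D.mulVec (ugl k) := by
      rw [hagree k (by omega), hugl, glue_of_lt up uf hkTp]
      exact (hxp k hkTp).2
    have h4 : C.mulVec (x' k) = C.mulVec (xs k) :=
      add_right_cancel (h1.symm.trans h3)
    rw [← Matrix.mulVec_mulVec, ← hdpow k (by omega)]
    funext b
    have h5 := congrFun h4 b
    simp only [Matrix.mulVec, dotProduct, mul_sub, Finset.sum_sub_distrib, Pi.zero_apply]
    simp only [Matrix.mulVec, dotProduct] at h5
    linarith
  have hδ0 : (fun i => x' 0 i - xs 0 i) = 0 := hobs_inj _ hCzero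
  have hxeq : ∀ k, k ≤ T → x' k = xs k := by
    intro k hk
    have h1 := hdpow k hk
    rw [hδ0, Matrix.mulVec_zero] at h1
    funext i
    have h2 := congrFun h1 i
    simp only [Pi.zero_apply] at h2
    linarith
  funext i
  have hTpi : Tp + (i : ℕ) < T := by omega
  have h1 := (hx' (Tp + (i : ℕ)) hTpi).2
  rw [glue_add yp yf' i] at h1
  rw [h1, hxeq (Tp + (i : ℕ)) (by omega), hyf0]
  simp only
  congr 1
  rw [hugl, glue_add up uf i]
end

section
/- Fix positive integers T_p, q, n_y, n̄_x. Let S_q = S ⊗ I_q ∈ ℝ^{qT_p×qT_p} be the block upper shift ([S]_{i,j} = δ_{i,j−1}), J_q = e_{T_p} ⊗ I_q ∈ ℝ^{qT_p×q} (e_{T_p} the last standard basis vector of ℝ^{T_p}), and Π = [I_{T_p−1}, 0] ⊗ I_{n_y} ∈ ℝ^{n_y(T_p−1)×n_yT_p}. Let ū(t) ∈ ℝ^{q} and y(t) ∈ ℝ^{n_y} be sequences, with stacked past windows ū_p(t) = col(ū(t−T_p+1), …, ū(t)) and y_p(t) = col(y(t−T_p+1), …, y(t)). Suppose there are matrices L_ūp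 ∈ ℝ^{qT_p×qT_p} invertible, L_yūp ∈ ℝ^{n_yT_p×qT_p}, L_yp ∈ ℝ^{n_yT_p×n̄_x} with Π L_yp injective, and sequences x_u(t) ∈ ℝ^{qT_p}, x_y(t) ∈ ℝ^{n̄_x} such that for all t: ū_p(t) = L_ūp x_u(t) and y_p(t) = L_yūp x_u(t) + L_yp x_y(t). Let Φ = ((ΠL_yp)ᵀ(ΠL_yp))^{−1}(ΠL_yp)ᵀ be the left inverse of ΠL_yp, and define A_uu = L_ūp^{−1} S_q L_ūp, B_uu = L_ūp^{−1} J_q, A_yu = ΦΠ(S_{n_y} L_yūp − L_yūp A_uu), A_yy = ΦΠ S_{n_y} L_yp, B_yu = −ΦΠ L_yūp B_uu, C_yu = J_{n_y}ᵀ L_yūp, C_yy = J_{n_y}ᵀ L_yp. Then for all t: x_u(t) = A_uu x_u(t−1) + B_uu ū(t), x_y(t) = A_yu x_u(t−1) + A_yy x_y(t−1) + B_yu ū(t), and y(t) = C_yu x_u(t) + C_yy x_y(t). -/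
open Matrix

/-- Block upper shift `S_q = S ⊗ I_q` with `[S]_{i,j} = δ_{i,j−1}`, acting on
stacked vectors in `ℝ^{q·Tp}` (indexed by `Fin Tp × Fin q`). -/
def shiftMat (Tp q : ℕ) : Matrix (Fin Tp × Fin q) (Fin Tp × Fin q) ℝ :=
  fun r c => if (c.1 : ℕ) = (r.1 : ℕ) + 1 ∧ r.2 = c.2 then 1 else 0

/-- Block selection `J_q = e_{Tp} ⊗ I_q` picking the last block of a stacked
vector in `ℝ^{q·Tp}`. -/
def selLast (Tp q : ℕ) : Matrix (Fin Tp × Fin q) (Fin q) ℝ :=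
  fun r c => if (r.1 : ℕ) = Tp - 1 ∧ r.2 = c then 1 else 0

/-- `Π = [I_{Tp−1}, 0] ⊗ I_{ny}`, removing the last block row of a stacked
vector in `ℝ^{ny·Tp}`. -/
def dropLast (Tp ny : ℕ) : Matrix (Fin (Tp - 1) × Fin ny) (Fin Tp × Fin ny) ℝ :=
  fun r c => if (r.1 : ℕ) = (c.1 : ℕ) ∧ r.2 = c.2 then 1 else 0

/-- Stacked past window `ζ_p(t) = col(ζ(t−Tp+1), …, ζ(t))`. -/
def pastWindow {ι : Type*} (Tp : ℕ) (z : ℤ → ι → ℝ) (t : ℤ) : Fin Tp × ι → ℝ :=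
  fun p => z (t - Tp + 1 + (p.1 : ℕ)) p.2

lemma shift_mulVec {Tp q : ℕ} (v : Fin Tp × Fin q → ℝ) (i : Fin Tp) (j : Fin q) :
    (shiftMat Tp q).mulVec v (i, j) = if h : (i : ℕ) + 1 < Tp then v (⟨i + 1, h⟩, j) else 0 := by
  unfold shiftMat Matrix.mulVec dotProduct
  split_ifs with h
  · rw [Finset.sum_eq_single ((⟨(i : ℕ) + 1, h⟩ : Fin Tp), j)]
    · simp
    · rintro ⟨a, b⟩ _ hb
      exact mul_eq_zero_of_left (if_neg (by
        rintro ⟨h1, h2⟩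
        exact hb (Prod.ext (Fin.ext h1) h2.symm))) _
    · intro hmem; exact absurd (Finset.mem_univ _) hmem
  · apply Finset.sum_eq_zero
    rintro ⟨a, b⟩ _
    exact mul_eq_zero_of_left (if_neg (by
      rintro ⟨h1, _⟩
      exact h (h1 ▸ a.isLt))) _

lemma selLast_mulVec {Tp q : ℕ} (z : Fin q → ℝ) (i : Fin Tp) (j : Fin q) :
    (selLast Tp q).mulVec z (i, j) = if (i : ℕ) = Tp - 1 then z j else 0 := by
  unfold selLast Matrix.mulVec dotProduct
  split_ifs with h
  · simp [h, Finset.sum_ite_eq]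
  · apply Finset.sum_eq_zero
    intro c _
    exact mul_eq_zero_of_left (if_neg (by rintro ⟨h1, _⟩; exact h h1)) _

lemma selLastT_mulVec {Tp q : ℕ} (hTp : 0 < Tp) (w : Fin Tp × Fin q → ℝ) (c : Fin q) :
    (selLast Tp q)ᵀ.mulVec w c = w (⟨Tp - 1, by omega⟩, c) := by
  unfold selLast Matrix.mulVec dotProduct Matrix.transpose
  rw [Finset.sum_eq_single ((⟨Tp - 1, by omega⟩ : Fin Tp), c)]
  · simp
  · rintro ⟨a, b⟩ _ hb
    exact mul_eq_zero_of_left (if_neg (by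
      rintro ⟨h1, h2⟩
      exact hb (Prod.ext (Fin.ext h1) h2))) _
  · intro hmem; exact absurd (Finset.mem_univ _) hmem

lemma dropLast_mulVec {Tp q : ℕ} (w : Fin Tp × Fin q → ℝ) (i : Fin (Tp - 1)) (j : Fin q) :
    (dropLast Tp q).mulVec w (i, j) = w (⟨i, by omega⟩, j) := by
  unfold dropLast Matrix.mulVec dotProduct
  rw [Finset.sum_eq_single ((⟨(i : ℕ), by omega⟩ : Fin Tp), j)]
  · simp
  · rintro ⟨a, b⟩ _ hb
    exact mul_eq_zero_of_left (if_neg (by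
      rintro ⟨h1, h2⟩
      exact hb (Prod.ext (Fin.ext h1.symm) h2.symm))) _
  · intro hmem; exact absurd (Finset.mem_univ _) hmem

lemma dropLast_selLast_vec {Tp q : ℕ} (z : Fin q → ℝ) :
    (dropLast Tp q).mulVec ((selLast Tp q).mulVec z) = 0 := by
  funext p
  obtain ⟨i, j⟩ := p
  rw [dropLast_mulVec, selLast_mulVec]
  have hlt : (i : ℕ) < Tp - 1 := i.isLt
  have hne : ¬ (((⟨(i : ℕ), by omega⟩ : Fin Tp) : ℕ) = Tp - 1) := by
    simp only [Fin.val_mk]; omega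
  rw [if_neg hne]
  rfl

lemma windowShift {q : ℕ} {Tp : ℕ} (hTp : 0 < Tp) (z : ℤ → Fin q → ℝ) (t : ℤ) :
    pastWindow Tp z t =
      (shiftMat Tp q).mulVec (pastWindow Tp z (t - 1)) + (selLast Tp q).mulVec (z t) := by
  funext p
  obtain ⟨i, j⟩ := p
  rw [Pi.add_apply, shift_mulVec, selLast_mulVec]
  by_cases h : (i : ℕ) + 1 < Tp
  · rw [dif_pos h, if_neg (by omega), add_zero]
    show z (t - Tp + 1 + ((i : ℕ) : ℤ)) j
        = z (t - 1 - Tp + 1 + ((((⟨(i : ℕ) + 1, h⟩ : Fin Tp)) : ℕ) : ℤ)) j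
    simp only [Fin.val_mk]
    congr 1
    push_cast
    ring
  · have hi : (i : ℕ) = Tp - 1 := by have := i.isLt; omega
    rw [dif_neg h, if_pos hi, zero_add]
    show z (t - Tp + 1 + ((i : ℕ) : ℤ)) j = z t j
    have harg : t - (Tp : ℤ) + 1 + ((i : ℕ) : ℤ) = t := by omega
    rw [harg]

lemma left_inverse_aux {m n : Type*} [Fintype m] [Fintype n] [DecidableEq n]
    (M : Matrix m n ℝ) (h : Function.Injective M.mulVec) :
    ((Mᵀ * M)⁻¹ * Mᵀ) * M = 1 := by
  have hker : ∀ v, (Mᵀ * M).mulVec v = 0 → v = 0 := by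
    intro v hv
    apply h
    rw [mulVec_zero]
    rw [← mulVec_mulVec] at hv
    replace hv := congr_arg (dotProduct v) hv
    rwa [dotProduct_mulVec, dotProduct_zero, vecMul_transpose, dotProduct_self_eq_zero] at hv
  have hinj : Function.Injective (Mᵀ * M).mulVec := by
    intro a b hab
    have hz : (Mᵀ * M).mulVec (a - b) = 0 := by
      rw [mulVec_sub, hab, sub_self]
    exact sub_eq_zero.mp (hker _ hz)
  have hu : IsUnit (Mᵀ * M) := mulVec_injective_iff_isUnit.mp hinj
  rw [Matrix.mul_assoc, nonsing_inv_mul _ ((isUnit_iff_isUnit_det _).mp hu)]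

/-- **Data-based state-space model from the parsimonious SMM.** Suppose the
past windows of `ū` and `y` satisfy `ū_p(t) = L_ūp x_u(t)` and
`y_p(t) = L_yūp x_u(t) + L_yp x_y(t)` for all `t`, with `L_ūp` invertible and
`Π L_yp` injective.  With `Φ` the left inverse of `Π L_yp` and the matrices
`A_uu = L_ūp⁻¹ S_q L_ūp`, `B_uu = L_ūp⁻¹ J_q`,
`A_yu = ΦΠ(S_{ny} L_yūp − L_yūp A_uu)`, `A_yy = ΦΠ S_{ny} L_yp`,
`B_yu = −ΦΠ L_yūp B_uu`, `C_yu = J_{ny}ᵀ L_yūp`, `C_yy = J_{ny}ᵀ L_yp`, the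
sequences satisfy `x_u(t) = A_uu x_u(t−1) + B_uu ū(t)`,
`x_y(t) = A_yu x_u(t−1) + A_yy x_y(t−1) + B_yu ū(t)`, and
`y(t) = C_yu x_u(t) + C_yy x_y(t)` for all `t`. -/
theorem statement8
    {Tp q ny nxbar : ℕ}
    (hTp : 0 < Tp) (hq : 0 < q) (hny : 0 < ny) (hnxbar : 0 < nxbar)
    (Lup : Matrix (Fin Tp × Fin q) (Fin Tp × Fin q) ℝ)
    (Lyup : Matrix (Fin Tp × Fin ny) (Fin Tp × Fin q) ℝ)
    (Lyp : Matrix (Fin Tp × Fin ny) (Fin nxbar) ℝ)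
    (hLup : IsUnit Lup)
    (hinj : Function.Injective ((dropLast Tp ny * Lyp).mulVec))
    (ub : ℤ → Fin q → ℝ) (y : ℤ → Fin ny → ℝ)
    (xu : ℤ → Fin Tp × Fin q → ℝ) (xy : ℤ → Fin nxbar → ℝ)
    (hwin_u : ∀ t : ℤ, pastWindow Tp ub t = Lup.mulVec (xu t))
    (hwin_y : ∀ t : ℤ,
        pastWindow Tp y t = Lyup.mulVec (xu t) + Lyp.mulVec (xy t)) :
    ∀ (Φ : Matrix (Fin nxbar) (Fin (Tp - 1) × Fin ny) ℝ)
      (Auu : Matrix (Fin Tp × Fin q) (Fin Tp × Fin q) ℝ)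
      (Buu : Matrix (Fin Tp × Fin q) (Fin q) ℝ)
      (Ayu : Matrix (Fin nxbar) (Fin Tp × Fin q) ℝ)
      (Ayy : Matrix (Fin nxbar) (Fin nxbar) ℝ)
      (Byu : Matrix (Fin nxbar) (Fin q) ℝ)
      (Cyu : Matrix (Fin ny) (Fin Tp × Fin q) ℝ)
      (Cyy : Matrix (Fin ny) (Fin nxbar) ℝ),
      Φ = ((dropLast Tp ny * Lyp)ᵀ * (dropLast Tp ny * Lyp))⁻¹ *
            (dropLast Tp ny * Lyp)ᵀ →
      Auu = Lup⁻¹ * shiftMat Tp q * Lup →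
      Buu = Lup⁻¹ * selLast Tp q →
      Ayu = Φ * dropLast Tp ny * (shiftMat Tp ny * Lyup - Lyup * Auu) →
      Ayy = Φ * dropLast Tp ny * shiftMat Tp ny * Lyp →
      Byu = -(Φ * dropLast Tp ny * Lyup * Buu) →
      Cyu = (selLast Tp ny)ᵀ * Lyup →
      Cyy = (selLast Tp ny)ᵀ * Lyp →
      ∀ t : ℤ,
        xu t = Auu.mulVec (xu (t - 1)) + Buu.mulVec (ub t) ∧
        xy t = Ayu.mulVec (xu (t - 1)) + Ayy.mulVec (xy (t - 1))
                 + Byu.mulVec (ub t) ∧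
        y t = Cyu.mulVec (xu t) + Cyy.mulVec (xy t) := by
  intro Φ Auu Buu Ayu Ayy Byu Cyu Cyy hΦ hAuu hBuu hAyu hAyy hByu hCyu hCyy t
  set P := dropLast Tp ny with hP
  set Sy := shiftMat Tp ny with hSy
  set Su := shiftMat Tp q with hSu
  set Ju := selLast Tp q with hJu
  set Jy := selLast Tp ny with hJy
  have hdet : IsUnit Lup.det := (isUnit_iff_isUnit_det _).mp hLup
  have hLL : Lup⁻¹ * Lup = 1 := nonsing_inv_mul _ hdet
  have hLinv : ∀ w, Lup⁻¹.mulVec (Lup.mulVec w) = w := by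
    intro w; rw [mulVec_mulVec, hLL, one_mulVec]
  have hΦM : Φ * (P * Lyp) = 1 := by
    rw [hΦ]; exact left_inverse_aux _ hinj
  have hΦv : ∀ w, Φ.mulVec ((P * Lyp).mulVec w) = w := by
    intro w; rw [mulVec_mulVec, hΦM, one_mulVec]
  -- first equation
  have h1 : Lup.mulVec (xu t) = Su.mulVec (Lup.mulVec (xu (t - 1))) + Ju.mulVec (ub t) := by
    rw [← hwin_u, ← hwin_u, ← windowShift hTp]
  have hxu : xu t = Auu.mulVec (xu (t - 1)) + Buu.mulVec (ub t) := by
    rw [hAuu, hBuu]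
    calc xu t = Lup⁻¹.mulVec (Lup.mulVec (xu t)) := (hLinv _).symm
    _ = Lup⁻¹.mulVec (Su.mulVec (Lup.mulVec (xu (t - 1))) + Ju.mulVec (ub t)) := by rw [h1]
    _ = _ := by
        rw [mulVec_add, mulVec_mulVec, mulVec_mulVec, mulVec_mulVec, Matrix.mul_assoc]
  -- third equation
  have hy : y t = Cyu.mulVec (xu t) + Cyy.mulVec (xy t) := by
    rw [hCyu, hCyy]
    have : (Jy)ᵀ.mulVec (pastWindow Tp y t) = y t := by
      funext c
      rw [selLastT_mulVec hTp]
      show y (t - Tp + 1 + (((⟨Tp - 1, by omega⟩ : Fin Tp) : ℕ) : ℤ)) c = y t c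
      simp only [Fin.val_mk]
      congr 1
      omega
    rw [← this, hwin_y, mulVec_add, mulVec_mulVec, mulVec_mulVec]
  -- second equation
  have h2 : P.mulVec (Lyup.mulVec (xu t) + Lyp.mulVec (xy t))
      = P.mulVec (Sy.mulVec (Lyup.mulVec (xu (t - 1)) + Lyp.mulVec (xy (t - 1)))) := by
    rw [← hwin_y, ← hwin_y]
    rw [windowShift hTp y t, mulVec_add, dropLast_selLast_vec, add_zero]
  have h4 : (P * Lyp).mulVec (xy t)
      = (P * (Sy * Lyup - Lyup * Auu)).mulVec (xu (t - 1))
        + (P * Sy * Lyp).mulVec (xy (t - 1)) + (-(P * Lyup * Buu)).mulVec (ub t) := by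
    rw [hxu] at h2
    simp only [mulVec_add, ← mulVec_mulVec, Matrix.sub_mulVec, Matrix.neg_mulVec,
      Matrix.mul_sub, Matrix.mul_assoc] at h2 ⊢
    funext r
    have h2r := congrFun h2 r
    simp only [Pi.add_apply, Pi.sub_apply, Pi.neg_apply] at h2r ⊢
    linarith
  have hxy : xy t = Ayu.mulVec (xu (t - 1)) + Ayy.mulVec (xy (t - 1)) + Byu.mulVec (ub t) := by
    rw [hAyu, hAyy, hByu]
    calc xy t = Φ.mulVec ((P * Lyp).mulVec (xy t)) := (hΦv _).symm
    _ = _ := by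
        rw [h4]
        simp only [mulVec_add, Matrix.neg_mulVec, Matrix.mulVec_neg, mulVec_mulVec,
          Matrix.mul_assoc]
  exact ⟨hxu, hxy, hy⟩
end
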